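/- arXiv:1509.08811 — 8 statements merged into one kernel-verified Lean document; each statement's English description precedes it below -/
import Mathlib

section
/- Every even polynomial f with rational coefficients of degree at most 2j is a linear combination with rational coefficients of B_0, B_1, …, B_j, where B_k(x) = C(x+k, 2k) + C(-x+k, 2k); moreover the coefficients are uniquely determined by the values f(0), f(1), …, f(j). -/
/-- Binomial coefficient polynomial `x(x-1)...(x-j+1)/j!` at integer `x`; zero for `j < 0`. -/
def binC (x j : ℤ) : ℚ :=
  if j < 0 then 0 else (∏ t ∈ Finset.range j.toNat, ((x : ℚ) - t)) / (j.toNat).factorial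

open Polynomial in
/-- The binomial coefficient polynomial `p(p-1)...(p-n+1)/n!` of a polynomial `p`,
zero for negative `n`. -/
noncomputable def Cpol (p : Polynomial ℚ) (n : ℤ) : Polynomial ℚ :=
  if n < 0 then 0 else
    C (1 / (n.toNat).factorial : ℚ) * ∏ t ∈ Finset.range n.toNat, (p - C (t : ℚ))

open Polynomial in
/-- `B_k = C(X+k, 2k) + C(-X+k, 2k)` as a polynomial. -/
noncomputable def Bpol (k : ℕ) : Polynomial ℚ :=
  Cpol (X + C (k : ℚ)) (2 * k) + Cpol (-X + C (k : ℚ)) (2 * k)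

/-! An even polynomial of degree `≤ 2j` vanishing at `0, …, j` has the `2j + 1` roots
`-j, …, j`, so it is zero. Hence `f = ∑ c_k B_k` iff both sides agree at `0, …, j`, i.e. iff
`M c = (f(m))_m` for `M = (B_k(m))_{m,k}`. For `m ≤ k` one has
`B_k(m) = C(m+k, 2k) + C(k-m, 2k)`, which vanishes for `m < k` and is `≥ 1` for `m = k`, so `M` is
lower triangular with nonzero diagonal, hence invertible. -/

open Polynomial

theorem Polynomial.eq_zero_of_even_of_eval_natCast_eq_zero {R : Type*} [CommRing R] [IsDomain R]
    [CharZero R] {p : R[X]} {n : ℕ} (heven : ∀ x, p.eval (-x) = p.eval x)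
    (hdeg : p.natDegree ≤ 2 * n) (hzero : ∀ m ≤ n, p.eval (m : R) = 0) : p = 0 := by
  refine eq_zero_of_natDegree_lt_card_of_eval_eq_zero p
    (f := fun i : Finset.Icc (-(n : ℤ)) n => ((i : ℤ) : R))
    (Int.cast_injective.comp Subtype.val_injective) (fun ⟨i, hi⟩ => ?_) ?_
  · change p.eval ((i : ℤ) : R) = 0
    obtain ⟨m, hm, rfl | rfl⟩ : ∃ m ≤ n, i = m ∨ i = -m :=
      ⟨i.natAbs, by rw [Finset.mem_Icc] at hi; omega, Int.natAbs_eq i⟩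
    · exact_mod_cast hzero m hm
    · rw [Int.cast_neg, Int.cast_natCast, heven, hzero m hm]
  · rw [Fintype.card_coe, Int.card_Icc]
    omega

lemma Cpol_natCast (p : ℚ[X]) (n : ℕ) :
    Cpol p n = C (1 / n.factorial : ℚ) * ∏ t ∈ Finset.range n, (p - C (t : ℚ)) := by
  simp [Cpol]

lemma eval_Cpol_natCast (p : ℚ[X]) (n : ℕ) (x : ℚ) :
    (Cpol p n).eval x = (descPochhammer ℚ n).eval (p.eval x) / n.factorial := by
  simp [Cpol_natCast, eval_prod, descPochhammer_eval_eq_prod_range, div_eq_inv_mul]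

lemma eval_Cpol_of_eval_eq_natCast {p : ℚ[X]} {x : ℚ} {a : ℕ} (h : p.eval x = a) (n : ℕ) :
    (Cpol p n).eval x = a.choose n := by
  rw [eval_Cpol_natCast, h, Nat.cast_choose_eq_descPochhammer_div]

lemma natDegree_Cpol_natCast_le (p : ℚ[X]) (n : ℕ) :
    (Cpol p n).natDegree ≤ n * p.natDegree := by
  rw [Cpol_natCast]
  refine (natDegree_C_mul_le _ _).trans <| (natDegree_prod_le _ _).trans_eq ?_
  simp only [natDegree_sub_C, Finset.sum_const, Finset.card_range, smul_eq_mul]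

lemma Bpol_eq_Cpol (k : ℕ) :
    Bpol k = Cpol (X + C (k : ℚ)) ↑(2 * k) + Cpol (-X + C (k : ℚ)) ↑(2 * k) := by
  simp [Bpol]

lemma eval_Bpol_neg (k : ℕ) (x : ℚ) : (Bpol k).eval (-x) = (Bpol k).eval x := by
  simp only [Bpol_eq_Cpol, eval_add, eval_Cpol_natCast, eval_X, eval_neg, eval_C, neg_neg]
  exact add_comm _ _

lemma natDegree_Bpol_le (k : ℕ) : (Bpol k).natDegree ≤ 2 * k := by
  rw [Bpol_eq_Cpol]
  refine (natDegree_add_le _ _).trans (max_le ?_ ?_) <;>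
    refine (natDegree_Cpol_natCast_le _ _).trans
      (mul_le_of_le_one_right (Nat.zero_le (2 * k)) ?_)
  · exact natDegree_add_C.trans_le natDegree_X_le
  · exact natDegree_add_C.trans_le <| (natDegree_neg X).trans_le natDegree_X_le

lemma eval_Bpol_natCast {k m : ℕ} (h : m ≤ k) :
    (Bpol k).eval (m : ℚ) = (m + k).choose (2 * k) + (k - m).choose (2 * k) := by
  rw [Bpol_eq_Cpol, eval_add, eval_Cpol_of_eval_eq_natCast (a := m + k),
    eval_Cpol_of_eval_eq_natCast (a := k - m)]
  · simp [Nat.cast_sub h, neg_add_eq_sub]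
  · simp

lemma eval_Bpol_natCast_of_lt {k m : ℕ} (h : m < k) : (Bpol k).eval (m : ℚ) = 0 := by
  rw [eval_Bpol_natCast h.le, Nat.choose_eq_zero_of_lt (by omega),
    Nat.choose_eq_zero_of_lt (by omega)]
  simp

lemma eval_Bpol_self_ne_zero (k : ℕ) : (Bpol k).eval (k : ℚ) ≠ 0 := by
  rw [eval_Bpol_natCast le_rfl, ← two_mul, Nat.choose_self]
  positivity

noncomputable def bpolEvalMatrix (j : ℕ) : Matrix (Fin (j + 1)) (Fin (j + 1)) ℚ :=
  Matrix.of fun m k => (Bpol k).eval ((m : ℕ) : ℚ)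

lemma bijective_mulVec_bpolEvalMatrix (j : ℕ) : (bpolEvalMatrix j).mulVec.Bijective := by
  have hlower : (bpolEvalMatrix j).IsLowerTriangular := fun m k (hmk : m < k) =>
    eval_Bpol_natCast_of_lt (Fin.lt_def.mp hmk)
  have hdet : (bpolEvalMatrix j).det ≠ 0 := by
    rw [Matrix.det_of_isLowerTriangular _ hlower]
    exact Finset.prod_ne_zero_iff.mpr fun k _ => eval_Bpol_self_ne_zero k
  have hunit : IsUnit (bpolEvalMatrix j) :=
    (Matrix.isUnit_iff_isUnit_det _).mpr (isUnit_iff_ne_zero.mpr hdet)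
  exact ⟨Matrix.mulVec_injective_iff_isUnit.mpr hunit,
    Matrix.mulVec_surjective_iff_isUnit.mpr hunit⟩

lemma eval_sum_C_mul_Bpol_neg {j : ℕ} (c : Fin (j + 1) → ℚ) (x : ℚ) :
    (∑ k : Fin (j + 1), C (c k) * Bpol k).eval (-x) =
      (∑ k : Fin (j + 1), C (c k) * Bpol k).eval x := by
  simp only [eval_finsetSum, eval_mul, eval_C, eval_Bpol_neg]

lemma natDegree_sum_C_mul_Bpol_le {j : ℕ} (c : Fin (j + 1) → ℚ) :
    (∑ k : Fin (j + 1), C (c k) * Bpol k).natDegree ≤ 2 * j := by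
  refine natDegree_sum_le_of_forall_le _ _ fun k _ => (natDegree_C_mul_le _ _).trans ?_
  exact (natDegree_Bpol_le k).trans (by omega)

lemma mulVec_bpolEvalMatrix (j : ℕ) (c : Fin (j + 1) → ℚ) :
    (bpolEvalMatrix j).mulVec c =
      fun m : Fin (j + 1) => (∑ k : Fin (j + 1), C (c k) * Bpol k).eval ((m : ℕ) : ℚ) := by
  ext m
  simp [bpolEvalMatrix, Matrix.mulVec, dotProduct, eval_finsetSum, mul_comm]

lemma eq_sum_C_mul_Bpol_iff {j : ℕ} {f : ℚ[X]} (heven : ∀ x : ℚ, f.eval (-x) = f.eval x)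
    (hdeg : f.natDegree ≤ 2 * j) (c : Fin (j + 1) → ℚ) :
    f = ∑ k : Fin (j + 1), C (c k) * Bpol k ↔
      (bpolEvalMatrix j).mulVec c = fun m : Fin (j + 1) => f.eval ((m : ℕ) : ℚ) := by
  rw [mulVec_bpolEvalMatrix, eq_comm (a := f), ← sub_eq_zero]
  constructor
  · intro h
    funext m
    rw [← sub_eq_zero, ← eval_sub, h, eval_zero]
  · intro h
    refine eq_zero_of_even_of_eval_natCast_eq_zero (n := j) (fun x => ?_) ?_ fun m hm => ?_
    · simp only [eval_sub, eval_sum_C_mul_Bpol_neg, heven]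
    · exact (natDegree_sub_le _ _).trans (max_le (natDegree_sum_C_mul_Bpol_le c) hdeg)
    · simpa [sub_eq_zero] using congrFun h ⟨m, by omega⟩

open Polynomial in
theorem even_poly_basis (j : ℕ) (f : Polynomial ℚ)
    (heven : ∀ x : ℚ, f.eval (-x) = f.eval x) (hdeg : f.natDegree ≤ 2 * j) :
    ∃! c : Fin (j + 1) → ℚ, f = ∑ k : Fin (j + 1), C (c k) * Bpol k :=
  (existsUnique_congr (eq_sum_C_mul_Bpol_iff heven hdeg)).mpr
    ((bijective_mulVec_bpolEvalMatrix j).existsUnique _)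
end

section
/- For all integers j ≥ 0, the polynomial identity (-1)^j · C(x+j, j) · C(x-1, j) − (-1)^{j-1} · C(x+j-1, j-1) · C(x-1, j-1) = (-1)^j · C(2j, j) · B_j(x) / 2 holds, where B_j(x) = C(x+j, 2j) + C(-x+j, 2j). -/
open Polynomial in
lemma Cpol_eval (p : ℚ[X]) (k : ℕ) (x : ℚ) :
    (Cpol p (k:ℤ)).eval x = (∏ t ∈ Finset.range k, (p.eval x - t)) / k.factorial := by
  rw [Cpol, if_neg (by omega)]
  simp [eval_prod, div_eq_inv_mul]

lemma prod_desc (n : ℕ) (c : ℚ) :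
    ∏ t ∈ Finset.range n, (c - (t:ℚ)) = ∏ t ∈ Finset.range n, (c - (n:ℚ) + 1 + (t:ℚ)) := by
  rw [← Finset.prod_range_reflect]
  refine Finset.prod_congr rfl fun t ht => ?_
  have h := Finset.mem_range.mp ht
  rw [show ((n - 1 - t : ℕ):ℚ) = (n:ℚ) - 1 - t by
    rw [Nat.cast_sub (by omega), Nat.cast_sub (by omega)]; push_cast; ring]
  ring

lemma prod_neg_form (n : ℕ) (g : ℕ → ℚ) :
    ∏ t ∈ Finset.range n, (-(g t)) = (-1) ^ n * ∏ t ∈ Finset.range n, g t := by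
  induction n with
  | zero => simp
  | succ k ih => rw [Finset.prod_range_succ, Finset.prod_range_succ, ih]; ring

open Polynomial in
theorem telescoping_identity (j : ℕ) :
    C ((-1 : ℚ) ^ j) * (Cpol (X + C (j : ℚ)) j * Cpol (X - 1) j) -
      C ((-1 : ℚ) ^ (j + 1)) *
        (Cpol (X + C (j : ℚ) - 1) ((j : ℤ) - 1) * Cpol (X - 1) ((j : ℤ) - 1)) =
    C ((-1 : ℚ) ^ j * (Nat.choose (2 * j) j : ℚ) / 2) * Bpol j := by
  obtain _ | m := j
  · norm_num [Cpol, Bpol]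
    rw [show (2:ℚ[X]) = C 2 from (map_ofNat C 2).symm, ← C_mul]
    norm_num
  apply Polynomial.funext
  intro x
  rw [show ((m+1 : ℕ):ℤ) - 1 = ((m:ℕ):ℤ) by push_cast; ring,
      Bpol, show 2 * ((m+1 : ℕ):ℤ) = ((2*(m+1) : ℕ):ℤ) by push_cast; ring]
  simp only [Cpol_eval, eval_add, eval_sub, eval_mul, eval_C, eval_X, eval_one, eval_neg]
  -- atoms: A = (x+1)...(x+m), B = (x-m)...(x-1)
  have h4 : ∏ t ∈ Finset.range m, (x - 1 - (t:ℚ))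
      = ∏ t ∈ Finset.range m, (x - (m:ℚ) + (t:ℚ)) := by
    rw [prod_desc]
    exact Finset.prod_congr rfl fun t _ => by ring
  have h3 : ∏ t ∈ Finset.range m, (x + ((m+1:ℕ):ℚ) - 1 - (t:ℚ))
      = ∏ t ∈ Finset.range m, (x + 1 + (t:ℚ)) := by
    rw [prod_desc]
    exact Finset.prod_congr rfl fun t _ => by push_cast; ring
  have h1 : ∏ t ∈ Finset.range (m+1), (x + ((m+1:ℕ):ℚ) - (t:ℚ))
      = (∏ t ∈ Finset.range m, (x + 1 + (t:ℚ))) * (x + (m:ℚ) + 1) := by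
    rw [prod_desc, Finset.prod_range_succ]
    congr 1
    · exact Finset.prod_congr rfl fun t _ => by push_cast; ring
    · push_cast; ring
  have h2 : ∏ t ∈ Finset.range (m+1), (x - 1 - (t:ℚ))
      = (∏ t ∈ Finset.range m, (x - (m:ℚ) + (t:ℚ))) * (x - 1 - (m:ℚ)) := by
    rw [prod_desc, Finset.prod_range_succ']
    congr 1
    · exact Finset.prod_congr rfl fun t _ => by push_cast; ring
    · push_cast; ring
  have hxA : ∏ t ∈ Finset.range (m+1), (x + (m:ℚ) - (t:ℚ))
      = (∏ t ∈ Finset.range m, (x + 1 + (t:ℚ))) * x := by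
    rw [prod_desc, Finset.prod_range_succ']
    congr 1
    · exact Finset.prod_congr rfl fun t _ => by push_cast; ring
    · push_cast; ring
  have h5 : ∏ t ∈ Finset.range (2*(m+1)), (x + ((m+1:ℕ):ℚ) - (t:ℚ))
      = ((∏ t ∈ Finset.range m, (x - (m:ℚ) + (t:ℚ))) * x) *
        ((∏ t ∈ Finset.range m, (x + 1 + (t:ℚ))) * (x + (m:ℚ) + 1)) := by
    rw [prod_desc, show 2*(m+1) = (m+1)+(m+1) by ring, Finset.prod_range_add,
      Finset.prod_range_succ, Finset.prod_range_succ]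
    congr 1
    · congr 1
      · exact Finset.prod_congr rfl fun t _ => by push_cast; ring
      · push_cast; ring
    · congr 1
      · exact Finset.prod_congr rfl fun t _ => by push_cast; ring
      · push_cast; ring
  have h6 : ∏ t ∈ Finset.range (2*(m+1)), (-x + ((m+1:ℕ):ℚ) - (t:ℚ))
      = ((∏ t ∈ Finset.range m, (x + 1 + (t:ℚ))) * x) *
        ((∏ t ∈ Finset.range m, (x - (m:ℚ) + (t:ℚ))) * (x - 1 - (m:ℚ))) := by
    rw [prod_desc, show 2*(m+1) = (m+1)+(m+1) by ring, Finset.prod_range_add]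
    have c1 : ∏ t ∈ Finset.range (m+1),
        (-x + ((m+1:ℕ):ℚ) - (((m+1)+(m+1) : ℕ):ℚ) + 1 + (t:ℚ))
        = (-1:ℚ)^(m+1) * ((∏ t ∈ Finset.range m, (x + 1 + (t:ℚ))) * x) := by
      rw [← hxA, ← prod_neg_form]
      exact Finset.prod_congr rfl fun t _ => by push_cast; ring
    have c2 : ∏ t ∈ Finset.range (m+1),
        (-x + ((m+1:ℕ):ℚ) - (((m+1)+(m+1) : ℕ):ℚ) + 1 + (((m+1)+t : ℕ):ℚ))
        = (-1:ℚ)^(m+1) * ((∏ t ∈ Finset.range m, (x - (m:ℚ) + (t:ℚ))) * (x - 1 - (m:ℚ))) := by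
      rw [← h2, ← prod_neg_form]
      exact Finset.prod_congr rfl fun t _ => by push_cast; ring
    rw [c1, c2]
    have hsq : ((-1:ℚ))^(m+1) * (-1)^(m+1) = 1 := by
      rw [← pow_add]; exact Even.neg_one_pow ⟨m+1, by ring⟩
    linear_combination (((∏ t ∈ Finset.range m, (x + 1 + (t:ℚ))) * x) *
      ((∏ t ∈ Finset.range m, (x - (m:ℚ) + (t:ℚ))) * (x - 1 - (m:ℚ)))) * hsq
  rw [h1, h2, h3, h4, h5, h6]
  have hch : (((2*(m+1)).choose (m+1)) : ℚ)
      = ((2*(m+1)).factorial : ℚ) / (((m+1).factorial : ℚ) * ((m+1).factorial : ℚ)) := by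
    rw [Nat.cast_choose ℚ (by omega : m+1 ≤ 2*(m+1)), show 2*(m+1)-(m+1) = m+1 by omega]
  have hfact : (((m+1).factorial) : ℚ) = ((m:ℚ)+1) * (m.factorial : ℚ) := by
    rw [Nat.factorial_succ]; push_cast; ring
  rw [hch, hfact]
  have hm0 : ((m.factorial : ℚ)) ≠ 0 := Nat.cast_ne_zero.mpr m.factorial_ne_zero
  have h2f : (((2*(m+1)).factorial : ℚ)) ≠ 0 := Nat.cast_ne_zero.mpr (2*(m+1)).factorial_ne_zero
  have hm1 : ((m:ℚ)+1) ≠ 0 := by positivity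
  field_simp
  ring
end

section
/- With P_m as defined and d(m,k) the coefficients of P_m in the basis B_k (so that P_m(x) = Σ_k d(m,k)·B_k(x)), one has the closed form d(m,k) = Σ_{i=0}^{m} Σ_{j=k}^{m} 3·(-1)^{k+j} · C(2k,k) · C(j,i) · C(m,i) · C(i, m-j) / (2(2i-1)(2j+1)(2m-2i-1)) for m ≥ 0. -/
/-- The coefficients `d(m,k)`; zero for `m < 0`. -/
noncomputable def dd (m k : ℤ) : ℚ :=
  if m < 0 then 0 else
  ∑ i ∈ Finset.Icc 0 m, ∑ j ∈ Finset.Icc k m,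
    3 * (-1 : ℚ) ^ (k + j) * binC (2 * k) k * binC j i * binC m i * binC i (m - j) /
      (2 * (2 * i - 1) * (2 * j + 1) * (2 * m - 2 * i - 1))

/-- Binomial coefficient polynomial evaluated at a rational. -/
def binQ (x : ℚ) (j : ℤ) : ℚ :=
  if j < 0 then 0 else (∏ t ∈ Finset.range j.toNat, (x - t)) / (j.toNat).factorial

noncomputable def PQ (m : ℤ) (x : ℚ) : ℚ :=
  ∑ i ∈ Finset.Icc 0 m, ∑ j ∈ Finset.Icc 0 m,
    binQ (x + j) j * binQ (x - 1) j * binC j i * binC m i * binC i (m - j) *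
      3 / ((2 * i - 1) * (2 * j + 1) * (2 * m - 2 * i - 1))

def BQ (k : ℤ) (x : ℚ) : ℚ := binQ (x + k) (2 * k) + binQ (-x + k) (2 * k)


/-! Write `Q_j(x) = C(x+j,j)·C(x-1,j) = ∏_{t=1}^{j} (x² - t²) / (j!)²`. Since `B_0 = 2` and
`C(2j,j)/2 · B_j(x) = x² ∏_{t=1}^{j-1} (x² - t²) / (j!)² = Q_j(x) + Q_{j-1}(x)`, an alternating
telescoping sum gives `Q_j = Σ_{k ≤ j} (-1)^(j+k) C(2k,k)/2 · B_k`. Substituting this into `P_m` and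
exchanging the sums over `j` and `k` produces the coefficients `d(m,k)`. -/

open Finset
open scoped Nat

section CommRing

variable {R : Type*} [CommRing R]

theorem prod_range_add_sub_mul_prod_range_sub_one_sub (x : R) (j : ℕ) :
    (∏ t ∈ range j, (x + j - t)) * ∏ t ∈ range j, (x - 1 - t) =
      ∏ t ∈ range j, (x ^ 2 - ((t : R) + 1) ^ 2) := by
  rw [← prod_range_reflect, ← prod_mul_distrib]
  refine prod_congr rfl fun t ht => ?_
  have ht : t < j := mem_range.1 ht
  rw [Nat.cast_sub (by omega), Nat.cast_sub (by omega)]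
  push_cast
  ring

theorem prod_range_two_mul_add_two_sub (x : R) (k : ℕ) :
    ∏ t ∈ range (2 * k + 2), (x + (k + 1) - t) =
      x * (x + k + 1) * ∏ t ∈ range k, (x ^ 2 - ((t : R) + 1) ^ 2) := by
  induction k with
  | zero => simp [prod_range_succ, mul_comm]
  | succ k ih =>
    rw [show 2 * (k + 1) + 2 = 2 * k + 2 + 1 + 1 by ring, prod_range_succ, prod_range_succ']
    have hshift : ∀ t ∈ range (2 * k + 2),
        x + ((k + 1 : ℕ) + 1) - ((t + 1 : ℕ) : R) = x + (k + 1) - t := by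
      intro t _; push_cast; ring
    rw [prod_congr rfl hshift, ih, prod_range_succ]
    push_cast
    ring

end CommRing

theorem binQ_natCast (x : ℚ) (n : ℕ) : binQ x n = (∏ t ∈ range n, (x - t)) / n ! := by
  simp [binQ]

theorem binC_natCast (a n : ℕ) : binC a n = a.choose n := by
  have hfact : (n ! : ℚ) ≠ 0 := by positivity
  change binQ ((a : ℤ) : ℚ) n = _
  rw [Int.cast_natCast, binQ_natCast, ← descPochhammer_eval_eq_prod_range,
    descPochhammer_eval_eq_descFactorial, Nat.descFactorial_eq_factorial_mul_choose, Nat.cast_mul,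
    mul_div_cancel_left₀ _ hfact]

theorem binC_two_mul_self (k : ℕ) : binC (2 * k) k = k.centralBinom := by
  rw [Nat.centralBinom_eq_two_mul_choose, ← binC_natCast]
  push_cast
  rfl

theorem binQ_add_mul_binQ_sub_one (x : ℚ) (j : ℕ) :
    binQ (x + j) j * binQ (x - 1) j = (∏ t ∈ range j, (x ^ 2 - ((t : ℚ) + 1) ^ 2)) / j ! ^ 2 := by
  rw [binQ_natCast, binQ_natCast, div_mul_div_comm, prod_range_add_sub_mul_prod_range_sub_one_sub,
    ← sq]

theorem BQ_zero (x : ℚ) : BQ 0 x = 2 := by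
  norm_num [BQ, binQ]

theorem BQ_natCast_succ (x : ℚ) (k : ℕ) :
    BQ (k + 1) x = 2 * x ^ 2 * (∏ t ∈ range k, (x ^ 2 - ((t : ℚ) + 1) ^ 2)) / (2 * k + 2)! := by
  have h : 2 * ((k : ℤ) + 1) = ((2 * k + 2 : ℕ) : ℤ) := by push_cast; ring
  rw [BQ, h, binQ_natCast, binQ_natCast, ← add_div]
  push_cast
  rw [prod_range_two_mul_add_two_sub, prod_range_two_mul_add_two_sub]
  congr 1
  simp only [neg_sq]
  ring

theorem centralBinom_succ_div_two_mul_BQ_succ (x : ℚ) (k : ℕ) :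
    (k + 1).centralBinom / 2 * BQ (k + 1) x =
      x ^ 2 * (∏ t ∈ range k, (x ^ 2 - ((t : ℚ) + 1) ^ 2)) / (k + 1)! ^ 2 := by
  have hc : ((k + 1).centralBinom : ℚ) = (2 * k + 2)! / (k + 1)! ^ 2 := by
    rw [Nat.centralBinom_eq_two_mul_choose, Nat.cast_choose _ (by omega)]
    rw [show 2 * (k + 1) - (k + 1) = k + 1 by omega, show 2 * (k + 1) = 2 * k + 2 by ring, sq]
  have h1 : ((2 * k + 2)! : ℚ) ≠ 0 := by positivity
  rw [hc, BQ_natCast_succ]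
  field_simp

theorem binQ_add_mul_binQ_sub_one_succ_add_self (x : ℚ) (j : ℕ) :
    binQ (x + (j + 1 : ℕ)) (j + 1 : ℕ) * binQ (x - 1) (j + 1 : ℕ) + binQ (x + j) j * binQ (x - 1) j =
      (j + 1).centralBinom / 2 * BQ (j + 1) x := by
  have h1 : ((j + 1)! : ℚ) ≠ 0 := by positivity
  rw [binQ_add_mul_binQ_sub_one, binQ_add_mul_binQ_sub_one, centralBinom_succ_div_two_mul_BQ_succ,
    prod_range_succ, Nat.factorial_succ]
  push_cast
  field_simp
  ring

theorem binQ_add_mul_binQ_sub_one_eq_sum_range (x : ℚ) (j : ℕ) :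
    binQ (x + j) j * binQ (x - 1) j =
      ∑ k ∈ range (j + 1), (-1 : ℚ) ^ (k + j) * (k.centralBinom / 2 * BQ k x) := by
  induction j with
  | zero => norm_num [binQ, BQ_zero]
  | succ j ih =>
    rw [sum_range_succ, eq_sub_of_add_eq (binQ_add_mul_binQ_sub_one_succ_add_self x j), ih]
    have hsign : ∀ k ∈ range (j + 1), (-1 : ℚ) ^ (k + (j + 1)) * (k.centralBinom / 2 * BQ k x) =
        -((-1 : ℚ) ^ (k + j) * (k.centralBinom / 2 * BQ k x)) := by
      intro k _; rw [← add_assoc, pow_succ]; ring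
    rw [sum_congr rfl hsign, sum_neg_distrib, ← two_mul, pow_mul]
    push_cast
    ring

theorem sum_Icc_zero_natCast {M : Type*} [AddCommMonoid M] (n : ℕ) (f : ℤ → M) :
    ∑ k ∈ Icc (0 : ℤ) n, f k = ∑ k ∈ range (n + 1), f k := by
  rw [Int.Icc_eq_finset_map, sum_map]
  simp

theorem binQ_add_mul_binQ_sub_one_eq_sum (x : ℚ) {j : ℤ} (hj : 0 ≤ j) :
    binQ (x + j) j * binQ (x - 1) j =
      ∑ k ∈ Icc 0 j, (-1 : ℚ) ^ (k + j) * (binC (2 * k) k / 2 * BQ k x) := by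
  lift j to ℕ using hj
  rw [sum_Icc_zero_natCast, Int.cast_natCast, binQ_add_mul_binQ_sub_one_eq_sum_range]
  refine sum_congr rfl fun k _ => ?_
  rw [binC_two_mul_self, ← Nat.cast_add, zpow_natCast]

theorem dd_of_nonneg {m : ℤ} (hm : 0 ≤ m) (k : ℤ) :
    dd m k = ∑ i ∈ Icc 0 m, ∑ j ∈ Icc k m,
      3 * (-1 : ℚ) ^ (k + j) * binC (2 * k) k * binC j i * binC m i * binC i (m - j) /
        (2 * (2 * i - 1) * (2 * j + 1) * (2 * m - 2 * i - 1)) :=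
  if_neg (not_lt.2 hm)

theorem P_eq_sum_d_B (m : ℤ) (hm : 0 ≤ m) (x : ℚ) :
    PQ m x = ∑ k ∈ Finset.Icc 0 m, dd m k * BQ k x := by
  set w : ℤ → ℤ → ℚ := fun i j => binC j i * binC m i * binC i (m - j) * 3 /
    ((2 * i - 1) * (2 * j + 1) * (2 * m - 2 * i - 1))
  calc PQ m x = ∑ i ∈ Icc 0 m, ∑ j ∈ Icc 0 m, ∑ k ∈ Icc 0 j,
        (-1 : ℚ) ^ (k + j) * (binC (2 * k) k / 2 * BQ k x) * w i j := by
        refine sum_congr rfl fun i _ => sum_congr rfl fun j hj => ?_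
        rw [← sum_mul, ← binQ_add_mul_binQ_sub_one_eq_sum x (mem_Icc.1 hj).1]
        ring
    _ = ∑ i ∈ Icc 0 m, ∑ k ∈ Icc 0 m, ∑ j ∈ Icc k m,
        (-1 : ℚ) ^ (k + j) * (binC (2 * k) k / 2 * BQ k x) * w i j :=
        sum_congr rfl fun i _ => sum_comm' fun j k => by simp only [mem_Icc]; omega
    _ = ∑ k ∈ Icc 0 m, dd m k * BQ k x := by
        rw [sum_comm]
        refine sum_congr rfl fun k _ => ?_
        rw [dd_of_nonneg hm, sum_mul]
        refine sum_congr rfl fun i _ => ?_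
        rw [sum_mul]
        refine sum_congr rfl fun j _ => ?_
        simp only [w, div_eq_mul_inv, mul_inv]
        ring
end

section
/- For all integers m, k: m(m−1)·d(m,k) = 0 whenever m > 2k−2, where d(m,k) = Σ_{i=0}^{m} Σ_{j=k}^{m} 3·(-1)^{k+j}·C(2k,k)·C(j,i)·C(m,i)·C(i,m-j)/(2(2i-1)(2j+1)(2m-2i-1)) for m ≥ 0 and d(m,k) = 0 for m < 0. -/
/-! For `m = n ≥ 2` and `0 ≤ k` (so `2k ≤ n + 1`), a term with `j < k` has `2j < n` and
therefore `C(j,i) C(i,n-j) = 0`, so the inner sum may run over all `j ≤ n`. A Wilf–Zeilberger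
telescoping recurrence in `n` evaluates it:
`∑_j (-1)^j C(j,i) C(i,n-j) / (2j+1) = (-1)^n C(n,i) / ((2n+1) C(2n,2i))`.
Since `C(n,i)^2 C(2n,n) = C(2i,i) C(2n-2i,n-i) C(2n,2i)`, `d(n,k)` becomes a multiple of
`∑_{p+q=n} b_p b_q` with `b_p = C(2p,p)/(2p-1)`, the coefficients of `-√(1-4x)`. The square of
that series is `1 - 4x`, so the sum vanishes for `n ≥ 2`; concretely `b_0 = -1`,
`b_{p+1} = 2 Cat_p`, and the Catalan recurrence cancels the two boundary terms.
For `k < 0` the factor `C(2k,k)` is zero, and the factor `m(m-1)` disposes of `m = 0, 1`.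
-/

open Finset
open scoped Nat

lemma binC_natCast_s10 (n r : ℕ) : binC n r = n.choose r := by
  rw [binC, if_neg (by omega), Int.toNat_natCast, Nat.cast_choose_eq_descPochhammer_div,
    descPochhammer_eval_eq_prod_range]
  simp

lemma map_castEmbedding_Icc (a b : ℕ) : (Icc a b).map Nat.castEmbedding = Icc (a : ℤ) b :=
  coe_injective (by simpa using Nat.image_cast_int_Icc a b)

lemma sum_Icc_natCast {M : Type*} [AddCommMonoid M] (a b : ℕ) (f : ℤ → M) :
    ∑ j ∈ Icc (a : ℤ) b, f j = ∑ j ∈ Icc a b, f j := by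
  rw [← map_castEmbedding_Icc, sum_map]
  rfl

noncomputable def ddTerm (n K i j : ℕ) : ℚ :=
  3 * (-1) ^ (K + j) * ((2 * K).choose K : ℚ) * j.choose i * n.choose i * i.choose (n - j) /
    (2 * (2 * i - 1) * (2 * j + 1) * (2 * n - 2 * i - 1))

lemma dd_natCast (n K : ℕ) :
    dd n K = ∑ i ∈ range (n + 1), ∑ j ∈ Icc K n, ddTerm n K i j := by
  rw [dd, if_neg (by omega), ← Nat.cast_zero, sum_Icc_natCast, Nat.range_succ_eq_Icc_zero]
  refine sum_congr rfl fun i _ => ?_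
  rw [sum_Icc_natCast]
  refine sum_congr rfl fun j hj => ?_
  rw [ddTerm, ← Nat.cast_sub (mem_Icc.mp hj).2,
    show (2 : ℤ) * K = (2 * K : ℕ) by push_cast; ring, ← Nat.cast_add, zpow_natCast]
  simp only [binC_natCast_s10]
  push_cast
  ring

lemma cast_succ_mul_choose_succ (n k : ℕ) :
    ((k : ℚ) + 1) * (n + 1).choose (k + 1) = (n + 1) * n.choose k := by
  rw [mul_comm]
  exact_mod_cast (Nat.add_one_mul_choose_eq n k).symm

lemma cast_succ_mul_choose_succ_right (n k : ℕ) :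
    ((k : ℚ) + 1) * n.choose (k + 1) = (n - k) * n.choose k := by
  rcases le_or_gt k n with h | h
  · rw [← Nat.cast_sub h, mul_comm, mul_comm ((n - k : ℕ) : ℚ)]
    exact_mod_cast Nat.choose_succ_right_eq n k
  · simp [Nat.choose_eq_zero_of_lt h, Nat.choose_eq_zero_of_lt (Nat.lt_succ_of_lt h)]

lemma cast_choose_succ_mul (n k : ℕ) :
    ((n + 1).choose k : ℚ) * (n + 1 - k) = n.choose k * (n + 1) := by
  rcases le_or_gt k (n + 1) with h | h
  · rw [← Nat.cast_add_one, ← Nat.cast_sub h]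
    exact_mod_cast (Nat.choose_mul_succ_eq n k).symm
  · simp [Nat.choose_eq_zero_of_lt h, Nat.choose_eq_zero_of_lt (Nat.lt_of_succ_lt h)]

lemma cast_choose_two_mul_mul_choose_succ {n i : ℕ} (hi : i ≤ n) :
    (2 * n + 1 : ℚ) * (2 * n).choose (2 * i) * (n + 1).choose i =
      (2 * n + 1 - 2 * i) * n.choose i * (2 * n + 2).choose (2 * i) := by
  have hA1 := cast_choose_succ_mul (2 * n + 1) (2 * i)
  have hA2 := cast_choose_succ_mul (2 * n) (2 * i)
  have hB := cast_choose_succ_mul n i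
  push_cast at hA1 hA2 hB
  have hi' : (i : ℚ) ≤ n := by exact_mod_cast hi
  apply mul_right_cancel₀ (show (2 * n + 2 - 2 * i : ℚ) * (n + 1 - i) ≠ 0 by
    apply mul_ne_zero <;> linarith)
  linear_combination (-(2 * n + 1 - 2 * i : ℚ) * n.choose i * (n + 1 - i)) * hA1
    + (-(2 * n + 2 : ℚ) * n.choose i * (n + 1 - i)) * hA2
    + ((2 * n + 1 : ℚ) * (2 * n).choose (2 * i) * (2 * n + 2 - 2 * i)) * hB

lemma choose_mul_choose_sub_eq_zero {n i j : ℕ} (hj : 2 * j < n) :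
    j.choose i * i.choose (n - j) = 0 := by
  rcases lt_or_ge j i with h | h
  · rw [Nat.choose_eq_zero_of_lt h, zero_mul]
  · rw [Nat.choose_eq_zero_of_lt (by omega : i < n - j), mul_zero]

noncomputable def altChooseSum (n i : ℕ) : ℚ :=
  ∑ j ∈ range (n + 1), (-1) ^ j * j.choose i * i.choose (n - j) / (2 * j + 1)

-- Wilf–Zeilberger certificate of the recurrence `altChooseSum_succ`.
noncomputable def altChooseSumCert (i j l : ℕ) : ℚ :=
  (i + 1) * (-1) ^ (j + 1) * j.choose (i + 1) * i.choose l

lemma altChooseSum_term_eq_cert_sub (i j l : ℕ) :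
    ((j + l : ℚ) + 1 - i) * ((-1) ^ j * j.choose i / (2 * j + 1)) *
      ((2 * (j + l : ℚ) + 3) * i.choose (l + 1) + (2 * (j + l : ℚ) + 1 - 2 * i) * i.choose l) =
    altChooseSumCert i (j + 1) l - altChooseSumCert i j (l + 1) := by
  have h1 := cast_succ_mul_choose_succ j i
  have h2 := cast_succ_mul_choose_succ_right j i
  have h3 := cast_succ_mul_choose_succ_right i l
  unfold altChooseSumCert
  field_simp
  linear_combination (-1) ^ j * ((4 * j + 2 * l + 3 - 2 * i) * j.choose i * h3
    - (2 * (j : ℚ) + 1) * i.choose l * h1 - (2 * (j : ℚ) + 1) * i.choose (l + 1) * h2)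

lemma altChooseSum_succ {n i : ℕ} (hi : i ≤ n) :
    (2 * n + 3) * altChooseSum (n + 1) i = -(2 * n + 1 - 2 * i) * altChooseSum n i := by
  set P := ∑ j ∈ range (n + 1), (-1) ^ j * j.choose i * i.choose (n + 1 - j) / (2 * j + 1 : ℚ)
  have hsplit :
      altChooseSum (n + 1) i = P + (-1) ^ (n + 1) * (n + 1).choose i / (2 * (n + 1) + 1) := by
    rw [altChooseSum, sum_range_succ, Nat.sub_self, Nat.choose_zero_right]
    push_cast; ring
  have hlast : (2 * n + 3 : ℚ) * ((-1) ^ (n + 1) * (n + 1).choose i / (2 * (n + 1) + 1)) =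
      (-1) ^ (n + 1) * (n + 1).choose i := by
    field_simp; ring
  have htel : ((n : ℚ) + 1 - i) * ((2 * n + 3) * P + (2 * n + 1 - 2 * i) * altChooseSum n i) =
      altChooseSumCert i (n + 1) 0 - altChooseSumCert i 0 (n + 1) := by
    rw [altChooseSum, mul_sum, mul_sum, ← sum_add_distrib, mul_sum]
    convert sum_range_sub (fun j => altChooseSumCert i j (n + 1 - j)) (n + 1) using 1
    · refine sum_congr rfl fun j hj => ?_
      obtain ⟨l, rfl⟩ := Nat.exists_eq_add_of_le (mem_range_succ_iff.mp hj)
      rw [show j + l + 1 - j = l + 1 by omega, show j + l - j = l by omega,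
        show j + l + 1 - (j + 1) = l by omega]
      push_cast
      linear_combination altChooseSum_term_eq_cert_sub i j l
    · simp
  have hcert : altChooseSumCert i (n + 1) 0 - altChooseSumCert i 0 (n + 1) =
      (-1) ^ n * ((n + 1 : ℚ) - i) * (n + 1).choose i := by
    have := cast_succ_mul_choose_succ_right (n + 1) i
    simp only [altChooseSumCert, Nat.choose_zero_right, Nat.choose_zero_succ]
    push_cast at this ⊢
    linear_combination (-1) ^ n * this
  have hni : (n + 1 : ℚ) - i ≠ 0 := by
    have : (i : ℚ) ≤ n := by exact_mod_cast hi
    linarith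
  apply mul_left_cancel₀ hni
  rw [hsplit]
  linear_combination htel + hcert + ((n : ℚ) + 1 - i) * hlast

theorem altChooseSum_eq {n i : ℕ} (hi : i ≤ n) :
    altChooseSum n i = (-1) ^ n * n.choose i / ((2 * n + 1) * (2 * n).choose (2 * i)) := by
  induction n, hi using Nat.le_induction with
  | base =>
    rw [altChooseSum, sum_range_succ, sum_eq_zero fun j hj => by
      rw [Nat.choose_eq_zero_of_lt (mem_range.mp hj)]; simp]
    simp
  | succ n hin ih =>
    have hrec := altChooseSum_succ hin
    have hr := cast_choose_two_mul_mul_choose_succ hin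
    have h1 : ((2 * n).choose (2 * i) : ℚ) ≠ 0 := by
      exact_mod_cast (Nat.choose_pos (by omega)).ne'
    have h2 : ((2 * n + 2).choose (2 * i) : ℚ) ≠ 0 := by
      exact_mod_cast (Nat.choose_pos (by omega)).ne'
    rw [ih] at hrec
    rw [show 2 * (n + 1) = 2 * n + 2 by ring, eq_div_iff (by positivity)]
    field_simp at hrec
    apply mul_left_cancel₀ (mul_ne_zero (by positivity : (2 * n + 1 : ℚ) ≠ 0) h1)
    push_cast
    linear_combination ((2 * n + 2).choose (2 * i) : ℚ) * hrec + (-1) ^ n * hr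

lemma centralBinom_succ_div (i : ℕ) :
    ((i + 1).centralBinom : ℚ) / (2 * (i + 1 : ℕ) - 1) = 2 * catalan i := by
  have h1 : ((i : ℚ) + 1) * (i + 1).centralBinom = 2 * (2 * i + 1) * i.centralBinom := by
    exact_mod_cast Nat.succ_mul_centralBinom_succ i
  have h2 : ((i : ℚ) + 1) * catalan i = i.centralBinom := by
    exact_mod_cast succ_mul_catalan_eq_centralBinom i
  push_cast
  rw [show 2 * ((i : ℚ) + 1) - 1 = 2 * i + 1 by ring, div_eq_iff (by positivity)]
  apply mul_left_cancel₀ (by positivity : (i : ℚ) + 1 ≠ 0)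
  linear_combination h1 - 2 * (2 * (i : ℚ) + 1) * h2

theorem sum_antidiagonal_centralBinom_div_eq_zero {n : ℕ} (hn : 2 ≤ n) :
    ∑ p ∈ antidiagonal n, (p.1.centralBinom : ℚ) / (2 * p.1 - 1) *
      (p.2.centralBinom / (2 * p.2 - 1)) = 0 := by
  obtain ⟨n, rfl⟩ := Nat.exists_eq_add_of_le' hn
  have hcat := congrArg (fun c : ℕ => (c : ℚ)) (catalan_succ' n)
  simp only [Nat.cast_sum, Nat.cast_mul] at hcat
  have hmid : ∀ p ∈ antidiagonal n, ((p.1 + 1).centralBinom : ℚ) / (2 * (p.1 + 1 : ℕ) - 1) *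
      ((p.2 + 1).centralBinom / (2 * (p.2 + 1 : ℕ) - 1)) = 4 * (catalan p.1 * catalan p.2) := by
    intro p _
    rw [centralBinom_succ_div, centralBinom_succ_div]; ring
  have hend := centralBinom_succ_div (n + 1)
  rw [show n + 1 + 1 = n + 2 from rfl] at hend
  rw [Finset.Nat.antidiagonal_succ_succ', sum_cons, sum_cons, sum_map]
  simp only [Function.Embedding.coe_prodMap, Function.Embedding.coeFn_mk, Prod.map_fst,
    Prod.map_snd, Nat.succ_eq_add_one]
  rw [sum_congr rfl hmid, ← mul_sum, ← hcat]
  push_cast at hend ⊢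
  norm_num
  linear_combination (-2) * hend

lemma cast_choose_add_sq_mul_centralBinom (p q : ℕ) :
    ((p + q).choose p : ℚ) ^ 2 * (p + q).centralBinom =
      p.centralBinom * q.centralBinom * (2 * p + 2 * q).choose (2 * p) := by
  have h (r : ℕ) : (r.centralBinom : ℚ) = (2 * r)! / (r ! * r !) := by
    rw [Nat.centralBinom_eq_two_mul_choose, two_mul, Nat.cast_add_choose]
  rw [h, h, h, Nat.cast_add_choose, Nat.cast_add_choose, show 2 * (p + q) = 2 * p + 2 * q by ring]
  field_simp

lemma two_mul_cast_sub_one_ne_zero (i : ℕ) : (2 * i - 1 : ℚ) ≠ 0 := by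
  rw [sub_ne_zero]
  exact_mod_cast (by omega : 2 * i ≠ 1)

lemma sum_Icc_ddTerm {n K : ℕ} (i : ℕ) (hK : 2 * K ≤ n + 1) :
    ∑ j ∈ Icc K n, ddTerm n K i j =
      3 * (-1) ^ K * (2 * K).choose K * n.choose i / (2 * (2 * i - 1) * (2 * n - 2 * i - 1)) *
        altChooseSum n i := by
  have hsub : Icc K n ⊆ range (n + 1) := fun j hj => mem_range_succ_iff.mpr (mem_Icc.mp hj).2
  rw [altChooseSum, mul_sum, ← sum_subset hsub]
  · refine sum_congr rfl fun j _ => ?_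
    rw [ddTerm, div_mul_div_comm]
    congr 1 <;> ring
  · intro j hj hjK
    have h0 : (j.choose i : ℚ) * i.choose (n - j) = 0 := by
      simp only [mem_range, mem_Icc, not_and_or, not_le] at hj hjK
      exact_mod_cast choose_mul_choose_sub_eq_zero (by omega)
    rw [mul_assoc ((-1 : ℚ) ^ j), h0]
    simp

lemma sum_Icc_ddTerm_of_add_eq {n K i q : ℕ} (hiq : i + q = n) (hK : 2 * K ≤ n + 1) :
    ∑ j ∈ Icc K n, ddTerm n K i j =
      3 * (-1) ^ (K + n) * (2 * K).choose K / (2 * (2 * n + 1) * n.centralBinom) *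
        (i.centralBinom / (2 * i - 1) * (q.centralBinom / (2 * q - 1))) := by
  subst hiq
  rw [sum_Icc_ddTerm i hK, altChooseSum_eq (by omega), show 2 * (i + q) = 2 * i + 2 * q by ring]
  have hsq := cast_choose_add_sq_mul_centralBinom i q
  have h1 := two_mul_cast_sub_one_ne_zero i
  have h2 := two_mul_cast_sub_one_ne_zero q
  have h3 : ((2 * i + 2 * q).choose (2 * i) : ℚ) ≠ 0 := by
    exact_mod_cast (Nat.choose_pos (by omega)).ne'
  have h4 : ((i + q).centralBinom : ℚ) ≠ 0 := by exact_mod_cast (Nat.centralBinom_pos _).ne'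
  push_cast
  rw [show 2 * ((i : ℚ) + q) - 2 * i - 1 = 2 * q - 1 by ring]
  field_simp
  linear_combination ((2 * K).choose K : ℚ) * (-1) ^ (K + i + q) * hsq

theorem dd_natCast_eq_zero {n K : ℕ} (hn : 2 ≤ n) (hK : 2 * K ≤ n + 1) : dd n K = 0 := by
  rw [dd_natCast,
    ← Nat.sum_antidiagonal_eq_sum_range_succ (fun i _ => ∑ j ∈ Icc K n, ddTerm n K i j),
    sum_congr rfl fun p hp => sum_Icc_ddTerm_of_add_eq (mem_antidiagonal.mp hp) hK, ← mul_sum,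
    sum_antidiagonal_centralBinom_div_eq_zero hn, mul_zero]

theorem d_vanishes (m k : ℤ) (h : m > 2 * k - 2) :
    m * (m - 1) * dd m k = 0 := by
  rcases lt_or_ge m 0 with hm | hm
  · rw [dd, if_pos hm, mul_zero]
  rcases lt_or_ge k 0 with hk | hk
  · rw [dd, if_neg (not_lt.mpr hm),
      sum_eq_zero fun i _ => sum_eq_zero fun j _ => by simp [binC, hk], mul_zero]
  lift m to ℕ using hm
  lift k to ℕ using hk
  rcases lt_or_ge m 2 with hm2 | hm2
  · interval_cases m <;> simp
  rw [dd_natCast_eq_zero hm2 (by omega), mul_zero]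
end

section
/- For all integers m and k, the relation rel1(m,k) = 0 holds, where rel1(m,k) = −32(3−2k)²(m−k+1)(m−k+2)·d(m,k−2) + 4(m−k+1)·(2km² − 2(k−1)(8k−9)m + (2k−3)(8(k−2)k+9))·d(m,k−1) + k(m−2k+2)(m−2k+3)(2m−2k+1)·d(m,k). -/
noncomputable def rel1 (m k : ℤ) : ℚ :=
  -32 * (3 - 2 * k) ^ 2 * (m - k + 1) * (m - k + 2) * dd m (k - 2) +
    4 * (m - k + 1) *
      (2 * k * m ^ 2 - 2 * (k - 1) * (8 * k - 9) * m + (2 * k - 3) * (8 * (k - 2) * k + 9)) *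
      dd m (k - 1) +
    k * (m - 2 * k + 2) * (m - 2 * k + 3) * (2 * m - 2 * k + 1) * dd m k

open Finset

lemma binC_of_neg {x j : ℤ} (h : j < 0) : binC x j = 0 := by simp [binC, h]

lemma binC_natCast_s11 (x : ℤ) (n : ℕ) :
    binC x n = (∏ t ∈ range n, ((x : ℚ) - t)) / n.factorial := by
  simp [binC]

lemma succ_mul_binC_succ (x j : ℤ) : ((j : ℚ) + 1) * binC x (j + 1) = (x - j) * binC x j := by
  rcases lt_or_ge j 0 with hj | hj
  · rcases (by omega : j = -1 ∨ j + 1 < 0) with rfl | h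
    · simp [binC_of_neg]
    · rw [binC_of_neg h, binC_of_neg hj]; ring
  lift j to ℕ using hj
  rw [show (j : ℤ) + 1 = ((j + 1 : ℕ) : ℤ) by push_cast; ring, binC_natCast_s11, binC_natCast_s11,
    prod_range_succ, Nat.factorial_succ]
  push_cast
  field_simp

lemma sub_mul_binC (x j : ℤ) : ((x : ℚ) - j) * binC x j = x * binC (x - 1) j := by
  rcases lt_or_ge j 0 with hj | hj
  · rw [binC_of_neg hj, binC_of_neg hj]; ring
  lift j to ℕ using hj
  have key : ((x : ℚ) - (j : ℤ)) * ∏ t ∈ range j, ((x : ℚ) - t)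
      = x * ∏ t ∈ range j, (((x - 1 : ℤ) : ℚ) - t) := by
    rw [mul_comm, Int.cast_natCast, ← prod_range_succ (fun t : ℕ => (x : ℚ) - t),
      prod_range_succ', mul_comm]
    congr 1
    · simp
    · exact prod_congr rfl fun t _ => by push_cast; ring
  rw [binC_natCast_s11, binC_natCast_s11, ← mul_div_assoc, ← mul_div_assoc, key]

lemma binC_eq_zero_of_lt {x j : ℤ} (hx : 0 ≤ x) (h : x < j) : binC x j = 0 := by
  lift x to ℕ using hx
  lift j to ℕ using (by omega)
  rw [binC_natCast_s11, prod_eq_zero (mem_range.2 (by omega : x < j)) (by simp), zero_div]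

lemma succ_mul_binC_two_mul_succ (k : ℤ) :
    ((k : ℚ) + 1) * binC (2 * (k + 1)) (k + 1) = 2 * (2 * k + 1) * binC (2 * k) k := by
  have h1 := succ_mul_binC_succ (2 * (k + 1)) k
  have h2 := sub_mul_binC (2 * (k + 1)) k
  have h3 := sub_mul_binC (2 * k + 1) k
  rw [show 2 * (k + 1) - 1 = 2 * k + 1 by ring] at h2
  rw [show 2 * k + 1 - 1 = 2 * k by ring] at h3
  push_cast at h1 h2 h3
  linear_combination h1 + h2 + 2 * h3

noncomputable def diagTerm (m k i : ℤ) : ℚ :=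
  binC k i * binC m i * binC i (m - k) / ((2 * i - 1) * (2 * m - 2 * i - 1))

noncomputable def diagSum (m k : ℤ) : ℚ :=
  ∑ i ∈ Icc 0 m, diagTerm m k i

lemma diagTerm_of_lt {m k : ℤ} (h : m < k) (i : ℤ) : diagTerm m k i = 0 := by
  simp [diagTerm, binC_of_neg (sub_neg.2 h)]

lemma diagSum_of_lt {m k : ℤ} (h : m < k) : diagSum m k = 0 :=
  sum_eq_zero fun i _ => diagTerm_of_lt h i

lemma mul_diagTerm (m k i : ℤ) :
    (2 * (i : ℚ) - 1) * (2 * m - 2 * i - 1) * diagTerm m k i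
      = binC k i * binC m i * binC i (m - k) := by
  have hi : 2 * (i : ℚ) - 1 ≠ 0 := by exact_mod_cast (by omega : 2 * i - 1 ≠ 0)
  have hm : 2 * (m : ℚ) - 2 * i - 1 ≠ 0 := by
    exact_mod_cast (by omega : 2 * m - 2 * i - 1 ≠ 0)
  rw [diagTerm, mul_div_cancel₀ _ (mul_ne_zero hi hm)]

lemma diagTerm_ratio_k (m k i : ℤ) :
    2 * (2 * (k : ℚ) - 1) * (m - k + 1) * (binC (2 * (k - 1)) (k - 1) * diagTerm m (k - 1) i)
      = (k - i) * (k - m + i) * (binC (2 * k) k * diagTerm m k i) := by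
  have hc := succ_mul_binC_two_mul_succ (k - 1)
  have hk := sub_mul_binC k i
  have hm := succ_mul_binC_succ i (m - k)
  rw [sub_add_cancel] at hc
  rw [show m - k + 1 = m - (k - 1) by ring] at hm
  push_cast at hc hk hm
  unfold diagTerm
  linear_combination
    (-(binC (k - 1) i * binC m i * binC i (m - (k - 1)) * (m - k + 1)
      / ((2 * i - 1) * (2 * m - 2 * i - 1)))) * hc
    + (k * binC (2 * k) k * binC (k - 1) i * binC m i / ((2 * i - 1) * (2 * m - 2 * i - 1))) * hm
    - (binC (2 * k) k * binC m i * (i - m + k) * binC i (m - k)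
      / ((2 * i - 1) * (2 * m - 2 * i - 1))) * hk

lemma diagTerm_ratio_i (m k i : ℤ) :
    ((i : ℚ) + 1) * (k - m + i + 1) * (2 * i + 1) * (2 * m - 2 * i - 3) * diagTerm m k (i + 1)
      = (m - i) * (k - i) * (2 * i - 1) * (2 * m - 2 * i - 1) * diagTerm m k i := by
  have h := mul_diagTerm m k i
  have h' := mul_diagTerm m k (i + 1)
  have hk := succ_mul_binC_succ k i
  have hm := succ_mul_binC_succ m i
  have hi := sub_mul_binC (i + 1) (m - k)
  rw [add_sub_cancel_right] at hi
  push_cast at h' hi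
  linear_combination ((i : ℚ) + 1) * (k - m + i + 1) * h' - (m - i) * (k - i) * h
    + ((i : ℚ) + 1) * binC k (i + 1) * binC m (i + 1) * hi
    + ((i : ℚ) + 1) * binC i (m - k) * binC m (i + 1) * hk
    + ((k : ℚ) - i) * binC k i * binC i (m - k) * hm

noncomputable def recurrenceOp (m k : ℤ) (f : ℤ → ℚ) : ℚ :=
  -32 * (2 * k - 3) * (2 * k - 1) * (m - k + 1) * (m - k + 2) * f (k - 2)
    + 4 * (m - k + 1) *
      (2 * k * m ^ 2 - 2 * (8 * k ^ 2 - 9 * k + 3) * m + (2 * k - 1) * (8 * k ^ 2 - 8 * k + 3))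
      * f (k - 1)
    + k * (m - 2 * k) * (2 * m - 2 * k - 1) * (m - 2 * k + 1) * f k

lemma recurrenceOp_sum {ι : Type*} (s : Finset ι) (m k : ℤ) (f : ℤ → ι → ℚ) :
    recurrenceOp m k (fun j => ∑ i ∈ s, f j i)
      = ∑ i ∈ s, recurrenceOp m k (fun j => f j i) := by
  simp only [recurrenceOp, mul_sum, sum_add_distrib]

-- Zeilberger's certificate for the summand `binC (2 * k) k * diagTerm m k i`.
noncomputable def zeilbergerCert (m k i : ℤ) : ℚ :=
  -(i * (i - m + k) * (2 * i - 1 - m) * (2 * i - 1) * (2 * m - 2 * i - 1))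
    * (binC (2 * k) k * diagTerm m k i)

lemma recurrenceOp_diagTerm (m k i : ℤ) :
    (2 * (k : ℚ) - 1) * recurrenceOp m k (fun j => binC (2 * j) j * diagTerm m j i)
      = zeilbergerCert m k (i + 1) - zeilbergerCert m k i := by
  have hk := diagTerm_ratio_k m k i
  have hk' := diagTerm_ratio_k m (k - 1) i
  have hi := diagTerm_ratio_i m k i
  rw [show k - 1 - 1 = k - 2 by ring] at hk'
  push_cast at hk'
  unfold recurrenceOp zeilbergerCert
  push_cast
  linear_combination (-16 * (2 * (k : ℚ) - 1) ^ 2 * (m - k + 1)) * hk'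
    + (-8 * (2 * (k : ℚ) - 1) * (k - 1 - i) * (k - 1 - m + i)
      + 2 * (2 * k * m ^ 2 - 2 * (8 * k ^ 2 - 9 * k + 3) * m
        + (2 * k - 1) * (8 * k ^ 2 - 8 * k + 3))) * hk
    - (-(2 * (i : ℚ) + 1 - m) * binC (2 * k) k) * hi

lemma Int.sum_Ico_sub {M : Type*} [AddCommGroup M] (f : ℤ → M) {a b : ℤ} (h : a ≤ b) :
    ∑ i ∈ Ico a b, (f (i + 1) - f i) = f b - f a := by
  induction b, h using Int.leInduction with
  | base => simp
  | succ n hn ih =>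
    rw [← insert_Ico_right_eq_Ico_add_one hn, sum_insert (by simp), ih]
    abel

lemma recurrenceOp_diagSum (m k : ℤ) :
    recurrenceOp m k (fun j => binC (2 * j) j * diagSum m j) = 0 := by
  rcases lt_or_ge m 0 with hm | hm
  · simp [recurrenceOp, diagSum, Icc_eq_empty_of_lt hm]
  have hk : 2 * (k : ℚ) - 1 ≠ 0 := by exact_mod_cast (by omega : 2 * k - 1 ≠ 0)
  refine (mul_eq_zero.1 ?_).resolve_left hk
  simp only [diagSum, mul_sum]
  rw [recurrenceOp_sum, mul_sum]
  simp only [recurrenceOp_diagTerm]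
  rw [← Ico_add_one_right_eq_Icc, Int.sum_Ico_sub _ (by omega)]
  simp [zeilbergerCert, diagTerm, binC_eq_zero_of_lt hm (lt_add_one m)]

lemma dd_eq_sum_diagSum (m k : ℤ) :
    dd m k = ∑ j ∈ Icc k m,
      (-1 : ℚ) ^ (k + j) * binC (2 * k) k * (3 * diagSum m j / (2 * (2 * j + 1))) := by
  unfold dd
  split_ifs with hm
  · simp [diagSum, Icc_eq_empty_of_lt hm]
  rw [sum_comm]
  refine sum_congr rfl fun j _ => ?_
  simp only [diagSum, mul_sum, sum_div]
  refine sum_congr rfl fun i _ => ?_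
  simp only [diagTerm, div_eq_mul_inv, mul_inv]
  ring

lemma dd_of_lt {m k : ℤ} (h : m < k) : dd m k = 0 := by
  rw [dd_eq_sum_diagSum, Icc_eq_empty_of_lt h, sum_empty]

lemma dd_recurrence (m k : ℤ) :
    2 * (2 * (k : ℚ) + 1) * dd m k + (k + 1) * dd m (k + 1)
      = 3 * binC (2 * k) k * diagSum m k := by
  rcases lt_or_ge m k with hmk | hkm
  · rw [dd_of_lt hmk, dd_of_lt (by omega), diagSum_of_lt hmk]; ring
  have hk : (2 * (k : ℚ) + 1) ≠ 0 := by exact_mod_cast (by omega : 2 * k + 1 ≠ 0)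
  have hsign : (-1 : ℚ) ^ (k + k) = 1 := by rw [← two_mul, zpow_mul]; norm_num
  have htail : ((k : ℚ) + 1) * ∑ j ∈ Icc (k + 1) m, (-1 : ℚ) ^ ((k + 1 : ℤ) + j)
        * binC (2 * (k + 1 : ℤ)) (k + 1 : ℤ) * (3 * diagSum m j / (2 * (2 * j + 1)))
      = -(2 * (2 * k + 1) * ∑ j ∈ Icc (k + 1) m, (-1 : ℚ) ^ (k + j) * binC (2 * k) k
        * (3 * diagSum m j / (2 * (2 * j + 1)))) := by
    rw [mul_sum, mul_sum, ← sum_neg_distrib]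
    refine sum_congr rfl fun j _ => ?_
    rw [add_right_comm, zpow_add_one₀ (by norm_num)]
    linear_combination (-(-1 : ℚ) ^ (k + j) * (3 * diagSum m j / (2 * (2 * j + 1))))
      * succ_mul_binC_two_mul_succ k
  rw [dd_eq_sum_diagSum, dd_eq_sum_diagSum, ← insert_Icc_add_one_left_eq_Icc hkm,
    sum_insert (by simp), hsign, htail]
  field_simp
  ring

lemma rel1_recurrence (m k : ℤ) :
    2 * (2 * (k : ℚ) - 1) * rel1 m k + k * rel1 m (k + 1) = 0 :=
  calc 2 * (2 * (k : ℚ) - 1) * rel1 m k + k * rel1 m (k + 1)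
      = recurrenceOp m k (fun j => 2 * (2 * (j : ℚ) + 1) * dd m j + (j + 1) * dd m (j + 1)) := by
        simp only [rel1, recurrenceOp]
        rw [show k + 1 - 2 = k - 1 by ring, add_sub_cancel_right, show k - 2 + 1 = k - 1 by ring,
          sub_add_cancel]
        push_cast
        ring
    _ = 3 * recurrenceOp m k (fun j => binC (2 * j) j * diagSum m j) := by
        simp only [dd_recurrence, recurrenceOp]
        ring
    _ = 0 := by rw [recurrenceOp_diagSum, mul_zero]

lemma rel1_of_lt {m k : ℤ} (h : m + 2 < k) : rel1 m k = 0 := by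
  simp [rel1, dd_of_lt (by omega : m < k - 2), dd_of_lt (by omega : m < k - 1),
    dd_of_lt (by omega : m < k)]

lemma rel1_eq_zero_of_succ {m k : ℤ} (h : rel1 m (k + 1) = 0) : rel1 m k = 0 := by
  have hk : 2 * (2 * (k : ℚ) - 1) ≠ 0 := by exact_mod_cast (by omega : 2 * (2 * k - 1) ≠ 0)
  have key := rel1_recurrence m k
  rw [h, mul_zero, add_zero] at key
  exact (mul_eq_zero.1 key).resolve_left hk

theorem rel1_eq_zero (m k : ℤ) : rel1 m k = 0 := by
  rcases lt_or_ge (m + 3) k with hk | hk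
  · exact rel1_of_lt (by omega)
  induction k, hk using Int.leInductionDown with
  | base => exact rel1_of_lt (by omega)
  | pred n _ ih => exact rel1_eq_zero_of_succ (by rwa [sub_add_cancel])
end

section
/- For integers m, k, i with 0 < i < m = k−1, the rational number −(2i−2)!·(2m)!·(2m−2i−2)! / (2·(i!)²·(2i−1)!·((m−i)!)²·(2m−2i−1)!) lies in ℤ[1/2], i.e., its p-adic valuation is nonnegative for every odd prime p. -/
/-!
The quantity is in fact an integer. Writing `i = a` and `m - i = b`, the identity
`(2x)! (2x - 2)! = 2 (x!)² (2x - 1)! Cat(x - 1)` (a restatement of `C(2x, x) = 2 (2x - 1) Cat(x - 1)`)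
applied to `x = a` and `x = b`, together with `(2a + 2b)! = C(2a + 2b, 2a) (2a)! (2b)!`, shows that
it equals `-2 C(2m, 2i) Cat(i - 1) Cat(m - i - 1)`.
-/

open Nat

theorem factorial_two_mul_mul_factorial_two_mul_add_two (n : ℕ) :
    (2 * n)! * (2 * n + 2)! = 2 * catalan n * ((n + 1)! ^ 2 * (2 * n + 1)!) := by
  have hcentral : (2 * n)! = n.centralBinom * n ! * n ! := by
    simpa [two_mul, Nat.centralBinom] using (Nat.add_choose_mul_factorial_mul_factorial n n).symm
  rw [hcentral, ← succ_mul_catalan_eq_centralBinom, Nat.factorial_succ (2 * n + 1),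
    Nat.factorial_succ n]
  ring

theorem factorial_div_eq_two_mul_choose_mul_catalan_mul_catalan (n l : ℕ) :
    ((2 * n)! * (2 * n + 2 * l + 4)! * (2 * l)! : ℚ) /
        (2 * ((n + 1)! : ℚ) ^ 2 * ((2 * n + 1)! : ℚ) * ((l + 1)! : ℚ) ^ 2 * ((2 * l + 1)! : ℚ)) =
      ((2 * (2 * n + 2 * l + 4).choose (2 * l + 2) * catalan n * catalan l : ℕ) : ℚ) := by
  have hsplit : (2 * n + 2 * l + 4)! =
      (2 * n + 2 * l + 4).choose (2 * l + 2) * (2 * n + 2)! * (2 * l + 2)! := by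
    rw [show 2 * n + 2 * l + 4 = (2 * n + 2) + (2 * l + 2) by ring,
      Nat.add_choose_mul_factorial_mul_factorial]
  have hnat : (2 * n)! * (2 * n + 2 * l + 4)! * (2 * l)! =
      2 * (2 * n + 2 * l + 4).choose (2 * l + 2) * catalan n * catalan l *
        (2 * (n + 1)! ^ 2 * (2 * n + 1)! * (l + 1)! ^ 2 * (2 * l + 1)!) := by
    calc (2 * n)! * (2 * n + 2 * l + 4)! * (2 * l)!
        = (2 * n + 2 * l + 4).choose (2 * l + 2) *
            ((2 * n)! * (2 * n + 2)!) * ((2 * l)! * (2 * l + 2)!) := by rw [hsplit]; ring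
      _ = _ := by
        rw [factorial_two_mul_mul_factorial_two_mul_add_two,
          factorial_two_mul_mul_factorial_two_mul_add_two]
        ring
  rw [div_eq_iff (by positivity)]
  exact_mod_cast hnat

theorem frac1_in_Z_half_general (m i : ℤ) (h1 : 0 < i) (h2 : i < m)
    (p : ℕ) :
    0 ≤ padicValRat p
      (-(((2 * i - 2).toNat.factorial : ℚ) * ((2 * m).toNat.factorial : ℚ) *
          ((2 * m - 2 * i - 2).toNat.factorial : ℚ)) /
        (2 * ((i.toNat.factorial : ℚ)) ^ 2 * ((2 * i - 1).toNat.factorial : ℚ) *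
          (((m - i).toNat.factorial : ℚ)) ^ 2 * ((2 * m - 2 * i - 1).toNat.factorial : ℚ))) := by
  set n := (i - 1).toNat
  set l := (m - i - 1).toNat
  rw [show (2 * i - 2).toNat = 2 * n by omega, show (2 * m).toNat = 2 * n + 2 * l + 4 by omega,
    show (2 * m - 2 * i - 2).toNat = 2 * l by omega, show i.toNat = n + 1 by omega,
    show (2 * i - 1).toNat = 2 * n + 1 by omega, show (m - i).toNat = l + 1 by omega,
    show (2 * m - 2 * i - 1).toNat = 2 * l + 1 by omega, neg_div,
    factorial_div_eq_two_mul_choose_mul_catalan_mul_catalan, padicValRat.neg, padicValRat.of_nat]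
  exact Nat.cast_nonneg _

theorem frac1_in_Z_half (m k i : ℤ) (h1 : 0 < i) (h2 : i < m) (h3 : m = k - 1)
    (p : ℕ) (hp : p.Prime) (hp2 : p ≠ 2) :
    0 ≤ padicValRat p
      (-(((2 * i - 2).toNat.factorial : ℚ) * ((2 * m).toNat.factorial : ℚ) *
          ((2 * m - 2 * i - 2).toNat.factorial : ℚ)) /
        (2 * ((i.toNat.factorial : ℚ)) ^ 2 * ((2 * i - 1).toNat.factorial : ℚ) *
          (((m - i).toNat.factorial : ℚ)) ^ 2 * ((2 * m - 2 * i - 1).toNat.factorial : ℚ))) :=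
  frac1_in_Z_half_general m i h1 h2 p
end

section
/- For all odd integers q ≥ 3 and all integers m, i with 0 < i < m, the quantity −2⌊(m−i)/q⌋ + ⌊(2m−2i−2)/q⌋ − ⌊(2m−2i−1)/q⌋ − 2⌊i/q⌋ + ⌊(2i−2)/q⌋ − ⌊(2i−1)/q⌋ + ⌊2m/q⌋ is nonnegative. -/
private lemma floor_cast_div (a q : ℤ) (hq : 0 < q) : ⌊((a : ℚ)) / (q : ℚ)⌋ = a / q := by
  obtain ⟨n, rfl⟩ : ∃ n : ℕ, (n : ℤ) = q := ⟨q.toNat, Int.toNat_of_nonneg hq.le⟩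
  rw [← Rat.floor_intCast_div_natCast a n]
  norm_num

private lemma ediv_one (q t : ℤ) (h1 : q ≤ t) (h2 : t < 2 * q) : t / q = 1 := by
  have hq : q ≠ 0 := by omega
  have h : t = t - q + q * 1 := by ring
  rw [h, Int.add_mul_ediv_left _ _ hq, Int.ediv_eq_zero_of_lt (by omega) (by omega)]
  omega

private lemma ediv_negone (q t : ℤ) (h1 : -q ≤ t) (h2 : t < 0) : t / q = -1 := by
  have hq : q ≠ 0 := by omega
  have h : t = t + q + q * (-1) := by ring
  rw [h, Int.add_mul_ediv_left _ _ hq, Int.ediv_eq_zero_of_lt (by omega) (by omega)]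
  omega

private lemma key' (q r : ℤ) (hq : Odd q) (hq3 : 3 ≤ q) (hr0 : 0 ≤ r) (hrq : r < q) :
    0 ≤ 2 * r / q + ((2 * r - 2) / q - (2 * r - 1) / q) := by
  have hne : 2 * r ≠ q := by
    rintro h
    exact (Int.not_odd_iff_even.mpr ⟨r, by omega⟩) (h ▸ hq)
  rcases eq_or_lt_of_le hr0 with h0 | h0
  · subst h0
    norm_num
    rw [ediv_negone q (-2) (by omega) (by omega), ediv_negone q (-1) (by omega) (by omega)]
  · rcases lt_or_gt_of_ne hne with h | h
    · rw [Int.ediv_eq_zero_of_lt (by omega) (by omega),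
        Int.ediv_eq_zero_of_lt (by omega) (by omega),
        Int.ediv_eq_zero_of_lt (by omega) (by omega)]
      omega
    · rw [ediv_one q (2 * r) (by omega) (by omega), ediv_one q (2 * r - 1) (by omega) (by omega)]
      rcases eq_or_lt_of_le (show q - 1 ≤ 2 * r - 2 by omega) with h2 | h2
      · rw [Int.ediv_eq_zero_of_lt (by omega) (by omega)]
        omega
      · rw [ediv_one q (2 * r - 2) (by omega) (by omega)]
        omega

private lemma key (q x : ℤ) (hq : Odd q) (hq3 : 3 ≤ q) :
    0 ≤ 2 * x / q - 2 * (x / q) + ((2 * x - 2) / q - (2 * x - 1) / q) := by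
  have hq0 : q ≠ 0 := by omega
  have e1 : 2 * x / q = 2 * (x % q) / q + 2 * (x / q) := by
    rw [show 2 * x = 2 * (x % q) + q * (2 * (x / q)) by
        have := Int.mul_ediv_add_emod x q; ring_nf; omega,
      Int.add_mul_ediv_left _ _ hq0]
  have e2 : (2 * x - 2) / q = (2 * (x % q) - 2) / q + 2 * (x / q) := by
    rw [show 2 * x - 2 = (2 * (x % q) - 2) + q * (2 * (x / q)) by
        have := Int.mul_ediv_add_emod x q; ring_nf; omega,
      Int.add_mul_ediv_left _ _ hq0]
  have e3 : (2 * x - 1) / q = (2 * (x % q) - 1) / q + 2 * (x / q) := by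
    rw [show 2 * x - 1 = (2 * (x % q) - 1) + q * (2 * (x / q)) by
        have := Int.mul_ediv_add_emod x q; ring_nf; omega,
      Int.add_mul_ediv_left _ _ hq0]
  have hk := key' q (x % q) hq hq3 (Int.emod_nonneg x hq0) (Int.emod_lt_of_pos x (by omega))
  rw [e1, e2, e3]
  linarith

private lemma superadd (q u v : ℤ) (hq : 0 < q) : u / q + v / q ≤ (u + v) / q := by
  have hq0 : q ≠ 0 := by omega
  have h : u + v = (u % q + v % q) + q * (u / q + v / q) := by
    have h1 := Int.mul_ediv_add_emod u q
    have h2 := Int.mul_ediv_add_emod v q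
    ring_nf
    omega
  rw [h, Int.add_mul_ediv_left _ _ hq0]
  have : 0 ≤ (u % q + v % q) / q :=
    Int.ediv_nonneg (by have := Int.emod_nonneg u hq0; have := Int.emod_nonneg v hq0; omega)
      hq.le
  omega

theorem floor_test_nonneg (q m i : ℤ) (hq : Odd q) (hq3 : 3 ≤ q)
    (h1 : 0 < i) (h2 : i < m) :
    0 ≤ -2 * ⌊((m - i : ℤ) : ℚ) / (q : ℚ)⌋ + ⌊((2 * m - 2 * i - 2 : ℤ) : ℚ) / (q : ℚ)⌋ -
        ⌊((2 * m - 2 * i - 1 : ℤ) : ℚ) / (q : ℚ)⌋ - 2 * ⌊((i : ℤ) : ℚ) / (q : ℚ)⌋ +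
        ⌊((2 * i - 2 : ℤ) : ℚ) / (q : ℚ)⌋ - ⌊((2 * i - 1 : ℤ) : ℚ) / (q : ℚ)⌋ +
        ⌊((2 * m : ℤ) : ℚ) / (q : ℚ)⌋ := by
  have hq0 : (0 : ℤ) < q := by omega
  rw [floor_cast_div _ _ hq0, floor_cast_div _ _ hq0, floor_cast_div _ _ hq0,
    floor_cast_div _ _ hq0, floor_cast_div _ _ hq0, floor_cast_div _ _ hq0,
    floor_cast_div _ _ hq0]
  rw [show (2 * m - 2 * i - 2 : ℤ) = 2 * (m - i) - 2 from by ring,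
    show (2 * m - 2 * i - 1 : ℤ) = 2 * (m - i) - 1 from by ring,
    show (2 * m : ℤ) = 2 * (m - i) + 2 * i from by ring]
  have ka := key q (m - i) hq hq3
  have ki := key q i hq hq3
  have hs := superadd q (2 * (m - i)) (2 * i) hq0
  linarith
end

section
/- For integers m, k, i with m > k−1 ≥ i ≥ m+1−k > 0, the rational number −(2k−2)!·(m−2)! / (i!·(k−1)!·(k−1−i)!·(m−i)!·(m−k)!·(i+k−m−1)!) lies in ℤ[1/2]. -/
/-- Two-term carry: `a/q + b/q ≤ (a+b)/q`. -/
private lemma div_add_div_le (q a b : ℕ) (hq : 0 < q) : a / q + b / q ≤ (a + b) / q := by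
  rw [Nat.add_div hq]
  split <;> omega

/-- If `q ∤ n` and `n ≥ 1` then `(n-1)/q = n/q`. -/
private lemma pred_div_of_not_dvd {q n : ℕ} (hq : 0 < q) (h : ¬ q ∣ n) :
    (n - 1) / q = n / q := by
  have hd := Nat.div_add_mod n q
  have hr : n % q ≠ 0 := fun h0 => h (Nat.dvd_of_mod_eq_zero h0)
  have hrlt : n % q < q := Nat.mod_lt _ hq
  have hn : n - 1 = q * (n / q) + (n % q - 1) := by omega
  have h9 : (n % q - 1) / q = 0 := Nat.div_eq_of_lt (by omega)
  rw [hn, Nat.mul_add_div hq, h9]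
  omega

/-- If `q ∣ n` and `n ≥ 1` then `(n-1)/q + 1 = n/q`. -/
private lemma pred_div_of_dvd {q n : ℕ} (hq : 2 ≤ q) (hn : 1 ≤ n) (h : q ∣ n) :
    (n - 1) / q + 1 = n / q := by
  obtain ⟨t, rfl⟩ := h
  have hq0 : 0 < q := by omega
  have ht : 1 ≤ t := by
    rcases Nat.eq_zero_or_pos t with h0 | h0
    · simp [h0] at hn
    · exact h0
  have he : q * t - 1 = q * (t - 1) + (q - 1) := by
    have : q * t = q * (t - 1) + q := by
      rw [Nat.mul_sub_one]
      have : q ≤ q * t := Nat.le_mul_of_pos_right q ht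
      omega
    omega
  have h9 : (q - 1) / q = 0 := Nat.div_eq_of_lt (by omega)
  rw [he, Nat.mul_add_div hq0, h9, Nat.mul_div_cancel_left _ hq0]
  omega

/-- The key termwise inequality on floor divisions. -/
private lemma term_le (q a b c d e : ℕ) (hq : 2 ≤ q) (h1 : c + e = a + b)
    (h2 : a = d + e + 1) :
    a / q + (a + b) / q + b / q + c / q + d / q + e / q
      ≤ 2 * (a + b) / q + (c + d + e - 1) / q := by
  have hq0 : 0 < q := by omega
  have hab : a / q + b / q ≤ (a + b) / q := div_add_div_le q a b hq0
  have hcde : c / q + d / q + e / q ≤ (c + d + e) / q := by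
    calc c / q + d / q + e / q ≤ (c + d) / q + e / q := by
          have := div_add_div_le q c d hq0; omega
      _ ≤ (c + d + e) / q := div_add_div_le q (c + d) e hq0
  have h2ab : (a + b) / q + (a + b) / q ≤ 2 * (a + b) / q := by
    have h := div_add_div_le q (a + b) (a + b) hq0
    rwa [show a + b + (a + b) = 2 * (a + b) by ring] at h
  by_cases hdvd : q ∣ (c + d + e)
  · have hpd : (c + d + e - 1) / q + 1 = (c + d + e) / q :=
      pred_div_of_dvd hq (by omega) hdvd
    by_cases hcab : q ≤ a % q + b % q
    · have : a / q + b / q + 1 ≤ (a + b) / q := by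
        rw [Nat.add_div hq0]
        simp [hcab]
      omega
    · by_cases hcde2 : q ≤ c % q + d % q + e % q
      · have hkey : c / q + d / q + e / q + 1 ≤ (c + d + e) / q := by
          by_cases hcd : q ≤ c % q + d % q
          · have e1 : (c + d) / q = c / q + d / q + 1 := by
              rw [Nat.add_div hq0]; simp [hcd]
            have := div_add_div_le q (c + d) e hq0
            omega
          · have e1 : (c + d) / q = c / q + d / q := by
              rw [Nat.add_div hq0]; simp [hcd]
            have e2 : (c + d) % q = c % q + d % q := by
              conv_lhs => rw [Nat.add_mod]
              exact Nat.mod_eq_of_lt (by omega)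
            have e3 : (c + d + e) / q = (c + d) / q + e / q + 1 := by
              rw [Nat.add_div hq0]
              have : q ≤ (c + d) % q + e % q := by omega
              simp [this]
            omega
        omega
      · exfalso
        have hcm : c % q < q := Nat.mod_lt _ hq0
        have hdm : d % q < q := Nat.mod_lt _ hq0
        have hem : e % q < q := Nat.mod_lt _ hq0
        have hme : (c % q + d % q + e % q) % q = (c + d + e) % q :=
          ((Nat.mod_modEq c q).add (Nat.mod_modEq d q)).add (Nat.mod_modEq e q)
        have h0 : (c + d + e) % q = 0 := Nat.mod_eq_zero_of_dvd hdvd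
        have hsum : c % q + d % q + e % q = 0 := by
          have := Nat.mod_eq_of_lt (show c % q + d % q + e % q < q by omega)
          omega
        have hdc : q ∣ c := Nat.dvd_of_mod_eq_zero (by omega)
        have hdd : q ∣ d := Nat.dvd_of_mod_eq_zero (by omega)
        have hde : q ∣ e := Nat.dvd_of_mod_eq_zero (by omega)
        have hdab : q ∣ a + b := h1 ▸ hdc.add hde
        have habm : (a % q + b % q) % q = (a + b) % q :=
          (Nat.mod_modEq a q).add (Nat.mod_modEq b q)
        have hab0 : (a + b) % q = 0 := Nat.mod_eq_zero_of_dvd hdab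
        have ham : a % q < q := Nat.mod_lt _ hq0
        have hbm : b % q < q := Nat.mod_lt _ hq0
        have ha0 : a % q = 0 := by
          have := Nat.mod_eq_of_lt (show a % q + b % q < q by omega)
          omega
        have hda : q ∣ a := Nat.dvd_of_mod_eq_zero ha0
        have h1' : q ∣ 1 := by
          have : q ∣ a - (d + e) := Nat.dvd_sub hda (hdd.add hde)
          simpa [h2] using this
        have := Nat.le_of_dvd one_pos h1'
        omega
  · have hpd : (c + d + e - 1) / q = (c + d + e) / q :=
      pred_div_of_not_dvd hq0 hdvd
    omega

private lemma fact_val_le (p : ℕ) (hp : p.Prime) (a b c d e : ℕ) (h1 : c + e = a + b)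
    (h2 : a = d + e + 1)
    (hterm : ∀ q, 2 ≤ q → a / q + (a + b) / q + b / q + c / q + d / q + e / q
      ≤ 2 * (a + b) / q + (c + d + e - 1) / q) :
    padicValNat p (a.factorial * (a + b).factorial * b.factorial * c.factorial
        * d.factorial * e.factorial)
      ≤ padicValNat p ((2 * (a + b)).factorial * (c + d + e - 1).factorial) := by
  haveI := Fact.mk hp
  have F : ∀ x : ℕ, x.factorial ≠ 0 := fun x => (Nat.factorial_pos x).ne'
  rw [padicValNat.mul (by positivity) (F _), padicValNat.mul (by positivity) (F _),
    padicValNat.mul (by positivity) (F _), padicValNat.mul (by positivity) (F _),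
    padicValNat.mul (F _) (F _), padicValNat.mul (F _) (F _)]
  set B := 2 * (a + b) + (c + d + e) + 1 with hB
  have key : ∀ n : ℕ, n ≤ 2 * (a + b) + (c + d + e) →
      padicValNat p n.factorial = ∑ j ∈ Finset.Ico 1 B, n / p ^ j := by
    intro n hn
    exact padicValNat_factorial (lt_of_le_of_lt (Nat.log_le_self p n) (by omega))
  rw [key a (by omega), key (a + b) (by omega), key b (by omega), key c (by omega),
    key d (by omega), key e (by omega), key (2 * (a + b)) (by omega),
    key (c + d + e - 1) (by omega), ← Finset.sum_add_distrib, ← Finset.sum_add_distrib,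
    ← Finset.sum_add_distrib, ← Finset.sum_add_distrib, ← Finset.sum_add_distrib, ← Finset.sum_add_distrib]
  apply Finset.sum_le_sum
  intro j hj
  have hj1 : 1 ≤ j := (Finset.mem_Ico.mp hj).1
  exact hterm (p ^ j) (Nat.one_lt_pow (by omega) hp.one_lt)

theorem frac2_in_Z_half (m k i : ℤ) (h1 : m > k - 1) (h2 : k - 1 ≥ i)
    (h3 : i ≥ m + 1 - k) (h4 : m + 1 - k > 0)
    (p : ℕ) (hp : p.Prime) (hp2 : p ≠ 2) :
    0 ≤ padicValRat p
      (-(((2 * k - 2).toNat.factorial : ℚ) * ((m - 2).toNat.factorial : ℚ)) /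
        ((i.toNat.factorial : ℚ) * ((k - 1).toNat.factorial : ℚ) *
          ((k - 1 - i).toNat.factorial : ℚ) * ((m - i).toNat.factorial : ℚ) *
          ((m - k).toNat.factorial : ℚ) * ((i + k - m - 1).toNat.factorial : ℚ))) := by
  haveI := Fact.mk hp
  set a := i.toNat with ha
  set b := (k - 1 - i).toNat with hb
  set c := (m - i).toNat with hc
  set d := (m - k).toNat with hd
  set e := (i + k - m - 1).toNat with he
  have E1 : (k - 1).toNat = a + b := by omega
  have E2 : (2 * k - 2).toNat = 2 * (a + b) := by omega
  have E3 : (m - 2).toNat = c + d + e - 1 := by omega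
  have H1 : c + e = a + b := by omega
  have H2 : a = d + e + 1 := by omega
  rw [E1, E2, E3]
  have hrw : (-(((2 * (a + b)).factorial : ℚ) * ((c + d + e - 1).factorial : ℚ)) /
        ((a.factorial : ℚ) * ((a + b).factorial : ℚ) * (b.factorial : ℚ) * (c.factorial : ℚ)
          * (d.factorial : ℚ) * (e.factorial : ℚ)))
      = -((((2 * (a + b)).factorial * (c + d + e - 1).factorial : ℕ) : ℚ) /
          ((a.factorial * (a + b).factorial * b.factorial * c.factorial * d.factorial
            * e.factorial : ℕ) : ℚ)) := by
    push_cast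
    ring
  have hAne : (((2 * (a + b)).factorial * (c + d + e - 1).factorial : ℕ) : ℚ) ≠ 0 :=
    Nat.cast_ne_zero.mpr (Nat.mul_ne_zero (Nat.factorial_pos _).ne' (Nat.factorial_pos _).ne')
  have hBne : ((a.factorial * (a + b).factorial * b.factorial * c.factorial * d.factorial
      * e.factorial : ℕ) : ℚ) ≠ 0 := by
    refine Nat.cast_ne_zero.mpr ?_
    have F : ∀ x : ℕ, x.factorial ≠ 0 := fun x => (Nat.factorial_pos x).ne'
    exact Nat.mul_ne_zero (Nat.mul_ne_zero (Nat.mul_ne_zero (Nat.mul_ne_zero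
      (Nat.mul_ne_zero (F _) (F _)) (F _)) (F _)) (F _)) (F _)
  rw [hrw, padicValRat.neg, padicValRat.div hAne hBne, padicValRat.of_nat,
    padicValRat.of_nat, sub_nonneg]
  exact_mod_cast fact_val_le p hp a b c d e H1 H2
    (fun q hq => term_le q a b c d e hq H1 H2)
end
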